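/- arXiv:1704.04295 — 4 statements merged into one kernel-verified Lean document; each statement's English description precedes it below -/
import Mathlib

section
/- In diffusion on an n-vertex graph, the potential P(t) = Σ_v w_v(t)·w_v(t+1) satisfies P(t) ≥ -n(n-1)²/4 for all t ≥ 0. -/
open Finset Classical

/-- One step of the diffusion process: each vertex gains one chip from each
neighbour with a strictly larger label and loses one chip to each neighbour
with a strictly smaller label. -/
noncomputable def diffStep {n : ℕ} (G : SimpleGraph (Fin n)) (w : Fin n → ℤ) : Fin n → ℤ :=
  fun v => w v + ((Finset.univ.filter fun u => G.Adj v u ∧ w v < w u).card : ℤ)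
             - ((Finset.univ.filter fun u => G.Adj v u ∧ w u < w v).card : ℤ)

/-- The labelling at time `t` of the diffusion process started from `w0`. -/
noncomputable def diff {n : ℕ} (G : SimpleGraph (Fin n)) (w0 : Fin n → ℤ) (t : ℕ) : Fin n → ℤ :=
  (diffStep G)^[t] w0

/-- The potential `P(t) = ∑_v w_v(t) · w_v(t+1)`. -/
noncomputable def pot {n : ℕ} (G : SimpleGraph (Fin n)) (w0 : Fin n → ℤ) (t : ℕ) : ℤ :=
  ∑ v, diff G w0 t v * diff G w0 (t + 1) v

/-- `x_{uv}(t) = sgn(w_u(t) - w_v(t))` for edges, `0` for non-edges. -/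
noncomputable def xlab {n : ℕ} (G : SimpleGraph (Fin n)) (w0 : Fin n → ℤ)
    (u v : Fin n) (t : ℕ) : ℤ :=
  if G.Adj u v then Int.sign (diff G w0 t u - diff G w0 t v) else 0

/-- `y_{uv}(t) = sgn(w_u(t+1) - w_v(t+1))` for edges, `0` for non-edges. -/
noncomputable def ylab {n : ℕ} (G : SimpleGraph (Fin n)) (w0 : Fin n → ℤ)
    (u v : Fin n) (t : ℕ) : ℤ :=
  if G.Adj u v then Int.sign (diff G w0 (t + 1) u - diff G w0 (t + 1) v) else 0

/-- The label `(x_{uv}(t), y_{uv}(t))` of the edge `uv` at time `t`. -/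
noncomputable def elabel {n : ℕ} (G : SimpleGraph (Fin n)) (w0 : Fin n → ℤ)
    (u v : Fin n) (t : ℕ) : ℤ × ℤ :=
  (xlab G w0 u v t, ylab G w0 u v t)


/-! Writing `w_v(t+1) = w_v(t) + d_v` with `|d_v| ≤ deg v ≤ n - 1`, each summand of the potential
is `a (a + d) = (a + d/2)² - d²/4 ≥ -(n-1)²/4`. -/

lemma neg_sq_le_four_mul_mul_add (a d : ℤ) : -d ^ 2 ≤ 4 * (a * (a + d)) := by
  nlinarith [sq_nonneg (2 * a + d)]

namespace SimpleGraph

variable {n : ℕ} (G : SimpleGraph (Fin n))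

lemma card_gain_add_card_loss_le_degree (w : Fin n → ℤ) (v : Fin n) :
    #{u | G.Adj v u ∧ w v < w u} + #{u | G.Adj v u ∧ w u < w v} ≤ G.degree v := by
  rw [← card_union_of_disjoint]
  · exact card_le_card fun u hu ↦ by
      rw [mem_neighborFinset]
      simp only [mem_union, mem_filter_univ] at hu
      exact hu.elim And.left And.left
  · exact disjoint_filter.2 fun u _ h₁ h₂ ↦ h₁.2.asymm h₂.2

lemma abs_diffStep_sub_le_degree (w : Fin n → ℤ) (v : Fin n) :
    |diffStep G w v - w v| ≤ G.degree v := by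
  have h := G.card_gain_add_card_loss_le_degree w v
  rw [diffStep, abs_le]
  constructor <;> omega

lemma neg_degree_sq_le_four_mul_mul_diffStep (w : Fin n → ℤ) (v : Fin n) :
    -(G.degree v : ℤ) ^ 2 ≤ 4 * (w v * diffStep G w v) := by
  have hsq : (diffStep G w v - w v) ^ 2 ≤ (G.degree v : ℤ) ^ 2 :=
    sq_le_sq.2 ((G.abs_diffStep_sub_le_degree w v).trans_eq (Int.abs_natCast _).symm)
  have h := neg_sq_le_four_mul_mul_add (w v) (diffStep G w v - w v)
  rw [add_sub_cancel] at h
  linarith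

lemma neg_mul_sq_le_four_mul_sum_mul_diffStep (w : Fin n → ℤ) :
    -(n * ((n : ℤ) - 1) ^ 2) ≤ 4 * ∑ v, w v * diffStep G w v := by
  have hvertex (v : Fin n) : -((n : ℤ) - 1) ^ 2 ≤ 4 * (w v * diffStep G w v) := by
    have hdeg : G.degree v + 1 ≤ n := by simpa using G.degree_lt_card_verts v
    have hsq : (G.degree v : ℤ) ^ 2 ≤ ((n : ℤ) - 1) ^ 2 := by gcongr; omega
    linarith [G.neg_degree_sq_le_four_mul_mul_diffStep w v]
  calc -(n * ((n : ℤ) - 1) ^ 2) = ∑ _v : Fin n, -((n : ℤ) - 1) ^ 2 := by simp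
    _ ≤ ∑ v, 4 * (w v * diffStep G w v) := sum_le_sum fun v _ ↦ hvertex v
    _ = 4 * ∑ v, w v * diffStep G w v := (mul_sum ..).symm

end SimpleGraph

lemma diff_succ {n : ℕ} (G : SimpleGraph (Fin n)) (w0 : Fin n → ℤ) (t : ℕ) :
    diff G w0 (t + 1) = diffStep G (diff G w0 t) :=
  Function.iterate_succ_apply' ..

theorem stmt2 {n : ℕ} (G : SimpleGraph (Fin n)) (w0 : Fin n → ℤ) (t : ℕ) :
    -((n : ℚ) * ((n : ℚ) - 1) ^ 2) / 4 ≤ (pot G w0 t : ℚ) := by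
  have h := G.neg_mul_sq_le_four_mul_sum_mul_diffStep (diff G w0 t)
  rw [← diff_succ, ← pot] at h
  have hq : -((n : ℚ) * ((n : ℚ) - 1) ^ 2) ≤ 4 * (pot G w0 t : ℚ) := by exact_mod_cast h
  linarith
end

section
/- In diffusion on a graph, if at time t some edge uv satisfies one of: (sgn(w_u(t)-w_v(t)), sgn(w_u(t+1)-w_v(t+1))) ∈ {(1,1), (-1,-1), (0,1), (0,-1)}, then P(t+1) < P(t), where P(t) = Σ_v w_v(t)·w_v(t+1). -/
open Finset Classical

/-!
Write `w, w', w''` for the labels at times `t, t+1, t+2`. Then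
`P(t+1) - P(t) = ∑_v w'_v (w''_v - w_v)` and `w''_v - w_v = ∑_{u ~ v} (x_{uv} + y_{uv})`.
Since `x_{uv} + y_{uv}` is antisymmetric in `(u, v)`, symmetrising the double sum gives
`2 (P(t+1) - P(t)) = -∑_{u,v} (w'_u - w'_v) (x_{uv} + y_{uv})`. Each summand has the form
`d (sgn a + sgn d)` with `d = w'_u - w'_v`, which is nonnegative, and positive exactly when
`d ≠ 0` and `sgn a ≠ -sgn d`, i.e. for the four edge labels in the hypothesis.
-/

theorem Int.mul_sign_add_sign_nonneg (a d : ℤ) : 0 ≤ d * (a.sign + d.sign) := by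
  rcases lt_trichotomy d 0 with hd | rfl | hd
  · rw [Int.sign_eq_neg_one_of_neg hd]
    rcases Int.sign_trichotomy a with ha | ha | ha <;> rw [ha] <;> omega
  · simp
  · rw [Int.sign_eq_one_of_pos hd]
    rcases Int.sign_trichotomy a with ha | ha | ha <;> rw [ha] <;> omega

theorem Int.mul_sign_add_sign_pos {a d : ℤ} (hd : d.sign ≠ 0) (had : a.sign + d.sign ≠ 0) :
    0 < d * (a.sign + d.sign) :=
  (Int.mul_sign_add_sign_nonneg a d).lt_of_ne
    (mul_ne_zero (fun h => hd (by simp [h])) had).symm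

theorem Finset.two_mul_sum_sum_mul_of_antisymm {ι R : Type*} [Fintype ι] [CommRing R]
    (x : ι → R) (f : ι → ι → R) (hf : ∀ p q, f q p = -f p q) :
    2 * ∑ p, ∑ q, x q * f p q = -∑ p, ∑ q, (x p - x q) * f p q := by
  have hswap : ∑ p, ∑ q, x p * f p q = -∑ p, ∑ q, x q * f p q := by
    rw [Finset.sum_comm, ← Finset.sum_neg_distrib]
    refine Finset.sum_congr rfl fun p _ => ?_
    rw [← Finset.sum_neg_distrib]
    exact Finset.sum_congr rfl fun q _ => by rw [hf, mul_neg]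
  simp only [sub_mul, Finset.sum_sub_distrib, hswap]
  ring

theorem diffStep_apply {n : ℕ} (G : SimpleGraph (Fin n)) (w : Fin n → ℤ) (v : Fin n) :
    diffStep G w v = w v + ∑ u, if G.Adj v u then (w u - w v).sign else 0 := by
  have hsign : ∀ u, (if G.Adj v u then (w u - w v).sign else 0)
      = (if G.Adj v u ∧ w v < w u then 1 else 0) -
        (if G.Adj v u ∧ w u < w v then 1 else 0) := by
    intro u
    by_cases hvu : G.Adj v u
    · rcases lt_trichotomy (w u) (w v) with h | h | h
      · simp [hvu, h, h.not_gt, Int.sign_eq_neg_one_of_neg (sub_neg.mpr h)]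
      · simp [hvu, h]
      · simp [hvu, h, h.not_gt, Int.sign_eq_one_of_pos (sub_pos.mpr h)]
    · simp [hvu]
  rw [Finset.sum_congr rfl fun u _ => hsign u, Finset.sum_sub_distrib, Finset.sum_boole,
    Finset.sum_boole, diffStep]
  ring

section Diffusion

variable {n : ℕ} (G : SimpleGraph (Fin n)) (w0 : Fin n → ℤ) (t : ℕ)

theorem xlab_swap (u v : Fin n) : xlab G w0 v u t = -xlab G w0 u v t := by
  unfold xlab
  rw [G.adj_comm]
  split_ifs
  · rw [← Int.sign_neg, neg_sub]
  · rfl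

theorem ylab_eq_xlab_succ (u v : Fin n) : ylab G w0 u v t = xlab G w0 u v (t + 1) := rfl

theorem diff_succ_apply (v : Fin n) :
    diff G w0 (t + 1) v = diff G w0 t v + ∑ u, xlab G w0 u v t := by
  rw [diff, Function.iterate_succ_apply', ← diff, diffStep_apply]
  congr 1
  refine Finset.sum_congr rfl fun u _ => ?_
  rw [xlab, G.adj_comm]

theorem diff_add_two_apply (v : Fin n) :
    diff G w0 (t + 2) v = diff G w0 t v + ∑ u, (xlab G w0 u v t + ylab G w0 u v t) := by
  simp only [diff_succ_apply G w0 (t + 1), diff_succ_apply G w0 t, Finset.sum_add_distrib,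
    ylab_eq_xlab_succ]
  ring

theorem pot_succ_sub_pot : pot G w0 (t + 1) - pot G w0 t =
    ∑ u, ∑ v, diff G w0 (t + 1) v * (xlab G w0 u v t + ylab G w0 u v t) := by
  rw [Finset.sum_comm]
  simp only [pot, ← Finset.sum_sub_distrib, ← Finset.mul_sum]
  refine Finset.sum_congr rfl fun v _ => ?_
  rw [diff_add_two_apply]
  ring

theorem two_mul_pot_succ_sub_pot : 2 * (pot G w0 (t + 1) - pot G w0 t) =
    -∑ u, ∑ v, (diff G w0 (t + 1) u - diff G w0 (t + 1) v) *
      (xlab G w0 u v t + ylab G w0 u v t) := by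
  rw [pot_succ_sub_pot]
  refine Finset.two_mul_sum_sum_mul_of_antisymm _ _ fun u v => ?_
  rw [ylab_eq_xlab_succ, ylab_eq_xlab_succ, xlab_swap G w0 t u v, xlab_swap G w0 (t + 1) u v]
  ring

theorem edge_term_nonneg (u v : Fin n) :
    0 ≤ (diff G w0 (t + 1) u - diff G w0 (t + 1) v) * (xlab G w0 u v t + ylab G w0 u v t) := by
  unfold xlab ylab
  split_ifs
  · exact Int.mul_sign_add_sign_nonneg _ _
  · simp

end Diffusion

theorem stmt6 {n : ℕ} (G : SimpleGraph (Fin n)) (w0 : Fin n → ℤ) (t : ℕ)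
    (u v : Fin n) (huv : G.Adj u v)
    (h : (Int.sign (diff G w0 t u - diff G w0 t v),
          Int.sign (diff G w0 (t + 1) u - diff G w0 (t + 1) v)) = ((1 : ℤ), (1 : ℤ)) ∨
         (Int.sign (diff G w0 t u - diff G w0 t v),
          Int.sign (diff G w0 (t + 1) u - diff G w0 (t + 1) v)) = ((-1 : ℤ), (-1 : ℤ)) ∨
         (Int.sign (diff G w0 t u - diff G w0 t v),
          Int.sign (diff G w0 (t + 1) u - diff G w0 (t + 1) v)) = ((0 : ℤ), (1 : ℤ)) ∨
         (Int.sign (diff G w0 t u - diff G w0 t v),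
          Int.sign (diff G w0 (t + 1) u - diff G w0 (t + 1) v)) = ((0 : ℤ), (-1 : ℤ))) :
    pot G w0 (t + 1) < pot G w0 t := by
  have hsign : (diff G w0 (t + 1) u - diff G w0 (t + 1) v).sign ≠ 0 ∧
      (diff G w0 t u - diff G w0 t v).sign +
        (diff G w0 (t + 1) u - diff G w0 (t + 1) v).sign ≠ 0 := by
    rcases h with h | h | h | h <;> rw [Prod.mk.injEq] at h <;> omega
  have hedge : 0 < (diff G w0 (t + 1) u - diff G w0 (t + 1) v) *
      (xlab G w0 u v t + ylab G w0 u v t) := by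
    rw [xlab, ylab, if_pos huv, if_pos huv]
    exact Int.mul_sign_add_sign_pos hsign.1 hsign.2
  have hsum : 0 < ∑ p, ∑ q, (diff G w0 (t + 1) p - diff G w0 (t + 1) q) *
      (xlab G w0 p q t + ylab G w0 p q t) :=
    Finset.sum_pos' (fun p _ => Finset.sum_nonneg fun q _ => edge_term_nonneg G w0 t p q)
      ⟨u, Finset.mem_univ u,
        Finset.sum_pos' (fun q _ => edge_term_nonneg G w0 t u q)
          ⟨v, Finset.mem_univ v, hedge⟩⟩
  linarith [two_mul_pot_succ_sub_pot G w0 t]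
end

section
/- In diffusion on a graph, if at time t the label of every edge belongs to {(1,-1), (-1,1), (0,0)}, then w_v(t+2) = w_v(t) for every vertex v. -/
open Finset Classical

/-! The hypothesis says exactly that every edge reverses its orientation between times `t` and
`t + 1`. Then, at every vertex, the neighbours that were above become those below and vice versa,
so the increment of the step `t + 1 → t + 2` is the negative of that of the step `t → t + 1`. -/

lemma lt_iff_lt_of_sign_sub_eq {a b c d : ℤ} (h : (a - b).sign = (c - d).sign) :
    b < a ↔ d < c := by
  rw [← sub_pos, ← Int.sign_eq_one_iff_pos, h, Int.sign_eq_one_iff_pos, sub_pos]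

lemma sign_sub_eq_swap {a b c d : ℤ} (h : (a - b).sign = (c - d).sign) :
    (b - a).sign = (d - c).sign := by
  rw [← neg_sub, Int.sign_neg, h, ← Int.sign_neg, neg_sub]

lemma diffStep_sub_self_eq_neg_of_sign_flip {n : ℕ} {G : SimpleGraph (Fin n)} {w w' : Fin n → ℤ}
    (hflip : ∀ u v, G.Adj u v → (w' u - w' v).sign = (w v - w u).sign) (v : Fin n) :
    diffStep G w' v - w' v = -(diffStep G w v - w v) := by
  have hup : univ.filter (fun u => G.Adj v u ∧ w' v < w' u) =
      univ.filter (fun u => G.Adj v u ∧ w u < w v) :=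
    filter_congr fun u _ => and_congr_right fun hvu =>
      lt_iff_lt_of_sign_sub_eq (hflip u v hvu.symm)
  have hdown : univ.filter (fun u => G.Adj v u ∧ w' u < w' v) =
      univ.filter (fun u => G.Adj v u ∧ w v < w u) :=
    filter_congr fun u _ => and_congr_right fun hvu =>
      lt_iff_lt_of_sign_sub_eq (hflip v u hvu)
  simp only [diffStep, hup, hdown]
  ring

lemma diffStep_diffStep_of_sign_flip {n : ℕ} {G : SimpleGraph (Fin n)} {w : Fin n → ℤ}
    (hflip : ∀ u v, G.Adj u v → (diffStep G w u - diffStep G w v).sign = (w v - w u).sign)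
    (v : Fin n) : diffStep G (diffStep G w) v = w v := by
  linarith [diffStep_sub_self_eq_neg_of_sign_flip hflip v]

lemma sign_sub_diff_succ_of_elabel {n : ℕ} {G : SimpleGraph (Fin n)} {w0 : Fin n → ℤ} {t : ℕ}
    {u v : Fin n} (hadj : G.Adj u v)
    (hlab : elabel G w0 u v t = ((1 : ℤ), (-1 : ℤ)) ∨ elabel G w0 u v t = ((-1 : ℤ), (1 : ℤ)) ∨
      elabel G w0 u v t = ((0 : ℤ), (0 : ℤ))) :
    (diff G w0 (t + 1) u - diff G w0 (t + 1) v).sign = (diff G w0 t v - diff G w0 t u).sign := by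
  rw [← neg_sub (diff G w0 t u), Int.sign_neg]
  simp only [elabel, xlab, ylab, if_pos hadj, Prod.mk.injEq] at hlab
  rcases hlab with ⟨hx, hy⟩ | ⟨hx, hy⟩ | ⟨hx, hy⟩ <;> simp [hx, hy]

theorem stmt13 {n : ℕ} (G : SimpleGraph (Fin n)) (w0 : Fin n → ℤ) (t : ℕ)
    (h : ∀ u v : Fin n, u < v → G.Adj u v →
      elabel G w0 u v t = ((1 : ℤ), (-1 : ℤ)) ∨
        elabel G w0 u v t = ((-1 : ℤ), (1 : ℤ)) ∨
        elabel G w0 u v t = ((0 : ℤ), (0 : ℤ))) :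
    ∀ v : Fin n, diff G w0 (t + 2) v = diff G w0 t v := by
  have hflip : ∀ u v, G.Adj u v →
      (diff G w0 (t + 1) u - diff G w0 (t + 1) v).sign = (diff G w0 t v - diff G w0 t u).sign := by
    intro u v hadj
    rcases lt_or_gt_of_ne (G.ne_of_adj hadj) with huv | hvu
    · exact sign_sub_diff_succ_of_elabel hadj (h u v huv hadj)
    · exact sign_sub_eq_swap (sign_sub_diff_succ_of_elabel hadj.symm (h v u hvu hadj.symm))
  rw [diff_succ] at hflip
  intro v
  rw [diff_succ, diff_succ]
  exact diffStep_diffStep_of_sign_flip hflip v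
end

section
/- Diffusion on any finite graph from any real-valued initial configuration is eventually periodic with period dividing 2. -/
open Finset Classical

noncomputable def diffStepR {n : ℕ} (G : SimpleGraph (Fin n)) (w : Fin n → ℝ) : Fin n → ℝ :=
  fun v => w v + ((Finset.univ.filter fun u => G.Adj v u ∧ w v < w u).card : ℝ)
             - ((Finset.univ.filter fun u => G.Adj v u ∧ w u < w v).card : ℝ)

noncomputable def diffR {n : ℕ} (G : SimpleGraph (Fin n)) (w0 : Fin n → ℝ) (t : ℕ) : Fin n → ℝ :=
  (diffStepR G)^[t] w0

/-!
The potential `P w = ∑ v, w v * (step w) v` does not increase along the diffusion: with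
`b = step w`, twice the drop `P w - P b` is the sum over ordered edges `(v, u)` of
`(b u - b v) * (sign (w u - w v) + sign (b u - b v))`, and each such term is nonnegative.
Since moreover `P w ≥ ‖w‖² - n² ‖w‖`, the orbit is bounded; its labels stay in `w0 + ℤⁿ`, so it
is finite and hence eventually periodic. On a cycle `P` is constant, so every edge term vanishes:
a nonzero edge sign is the negative of the previous one, and a zero edge sign stays zero, hence
by periodicity was zero all along. So every edge sign alternates, and two consecutive steps
cancel.
-/

lemma Real.self_mul_sign (r : ℝ) : r * Real.sign r = |r| := by
  rcases lt_trichotomy r 0 with hr | rfl | hr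
  · rw [Real.sign_of_neg hr, abs_of_neg hr]; ring
  · simp
  · rw [Real.sign_of_pos hr, abs_of_pos hr, mul_one]

lemma Real.mul_sign_add_sign_nonneg (β γ : ℝ) : 0 ≤ β * (Real.sign γ + Real.sign β) := by
  rcases lt_trichotomy β 0 with hβ | rfl | hβ <;>
    rcases Real.sign_apply_eq γ with h | h | h <;>
    simp [Real.sign_of_neg, Real.sign_of_pos, *] <;> linarith

lemma Real.sign_eq_neg_sign_of_mul_sign_add_sign_eq_zero {β γ : ℝ} (hβ : Real.sign β ≠ 0)
    (h : β * (Real.sign γ + Real.sign β) = 0) : Real.sign γ = -Real.sign β := by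
  rcases lt_trichotomy β 0 with hβ' | rfl | hβ'
  · rcases Real.sign_apply_eq γ with h' | h' | h' <;> simp [Real.sign_of_neg, *] at h ⊢ <;> linarith
  · simp at hβ
  · rcases Real.sign_apply_eq γ with h' | h' | h' <;> simp [Real.sign_of_pos, *] at h ⊢ <;> linarith

lemma SimpleGraph.two_mul_sum_mul_sum_neighborFinset {V : Type*} [Fintype V] (G : SimpleGraph V)
    [DecidableRel G.Adj] (x : V → ℝ) (f : V → V → ℝ) (hf : ∀ u v, f u v = -f v u) :
    2 * ∑ v, x v * ∑ u ∈ G.neighborFinset v, f v u =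
      -∑ v, ∑ u ∈ G.neighborFinset v, (x u - x v) * f v u := by
  have hswap : ∑ v, ∑ u ∈ G.neighborFinset v, x u * f v u =
      -∑ v, ∑ u ∈ G.neighborFinset v, x v * f v u := by
    rw [Finset.sum_comm' (t' := univ) (s' := fun u => G.neighborFinset u) (by simp [G.adj_comm]),
      ← Finset.sum_neg_distrib]
    refine Finset.sum_congr rfl fun v _ => ?_
    rw [← Finset.sum_neg_distrib]
    exact Finset.sum_congr rfl fun u _ => by rw [hf, mul_neg]
  simp only [Finset.mul_sum (G.neighborFinset _), sub_mul, Finset.sum_sub_distrib, hswap]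
  ring

lemma sq_norm_le_sum_sq {ι : Type*} [Fintype ι] (w : ι → ℝ) : ‖w‖ ^ 2 ≤ ∑ i, w i ^ 2 := by
  have h : ‖w‖ ≤ √(∑ i, w i ^ 2) :=
    (pi_norm_le_iff_of_nonneg (Real.sqrt_nonneg _)).2 fun i => Real.abs_le_sqrt <|
      Finset.single_le_sum (fun j _ => sq_nonneg (w j)) (Finset.mem_univ i)
  calc ‖w‖ ^ 2 ≤ √(∑ i, w i ^ 2) ^ 2 := pow_le_pow_left₀ (norm_nonneg w) h 2
    _ = ∑ i, w i ^ 2 := Real.sq_sqrt (Finset.sum_nonneg fun i _ => sq_nonneg (w i))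

lemma finite_setOf_eq_add_intCast_abs_le (c C : ℝ) :
    {x : ℝ | ∃ k : ℤ, x = c + k ∧ |x| ≤ C}.Finite := by
  refine ((Set.finite_Icc ⌈-C - c⌉ ⌊C - c⌋).image fun k : ℤ => c + k).subset ?_
  rintro _ ⟨k, rfl, hk⟩
  rw [abs_le] at hk
  exact ⟨k, ⟨Int.ceil_le.2 (by linarith), Int.le_floor.2 (by linarith)⟩, rfl⟩

lemma Antitone.eq_of_periodic {α : Type*} [PartialOrder α] {f : ℕ → α} {p : ℕ} (hf : Antitone f)
    (hper : Function.Periodic f p) (hp : 0 < p) (k m : ℕ) : f k = f m := by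
  have key : ∀ k m, f k ≤ f m := fun k m => by
    rw [← (hper.nat_mul m) k]
    exact hf (by nlinarith)
  exact le_antisymm (key k m) (key m k)

lemma Function.Periodic.succ_eq_neg {s : ℕ → ℝ} {p : ℕ} (hper : Function.Periodic s p)
    (hp : 0 < p) (h : ∀ k, s (k + 1) ≠ 0 → s k = -s (k + 1)) (k : ℕ) : s (k + 1) = -s k := by
  by_cases h0 : s (k + 1) = 0
  · have hzero : ∀ m, s (k + 1 + m) = 0 := by
      intro m
      induction m with
      | zero => exact h0
      | succ m ih =>
        show s (k + 1 + m + 1) = 0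
        by_contra hm
        have := h (k + 1 + m) hm
        rw [ih] at this
        exact hm (by linarith)
    have hk : s k = 0 := by
      rw [← hper k, show k + p = k + 1 + (p - 1) by omega]
      exact hzero _
    rw [h0, hk, neg_zero]
  · rw [h k h0, neg_neg]

section

variable {n : ℕ} (G : SimpleGraph (Fin n))

lemma diffStepR_apply (w : Fin n → ℝ) (v : Fin n) :
    diffStepR G w v = w v + ∑ u ∈ G.neighborFinset v, Real.sign (w u - w v) := by
  have hsign : ∀ u, Real.sign (w u - w v) =
      (if w v < w u then 1 else 0) - (if w u < w v then 1 else 0) := by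
    intro u
    rcases lt_trichotomy (w u) (w v) with h | h | h
    · simp [Real.sign_of_neg (sub_neg.2 h), h, h.not_gt]
    · simp [h]
    · simp [Real.sign_of_pos (sub_pos.2 h), h, h.not_gt]
  simp only [hsign, Finset.sum_sub_distrib, Finset.sum_boole, SimpleGraph.neighborFinset_eq_filter,
    Finset.filter_filter, diffStepR]
  ring

lemma exists_diffR_eq_add_intCast (w0 : Fin n → ℝ) (t : ℕ) (v : Fin n) :
    ∃ k : ℤ, diffR G w0 t v = w0 v + k := by
  induction t generalizing v with
  | zero => exact ⟨0, by simp [diffR]⟩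
  | succ t ih =>
    obtain ⟨k, hk⟩ := ih v
    refine ⟨k + (#{u | G.Adj v u ∧ diffR G w0 t v < diffR G w0 t u} : ℤ)
      - #{u | G.Adj v u ∧ diffR G w0 t u < diffR G w0 t v}, ?_⟩
    rw [diffR, Function.iterate_succ_apply', ← diffR, diffStepR, hk]
    push_cast
    ring

noncomputable def diffPotential (w : Fin n → ℝ) : ℝ :=
  ∑ v, w v * diffStepR G w v

lemma two_mul_diffPotential (w : Fin n → ℝ) :
    2 * diffPotential G w =
      2 * ∑ v, w v ^ 2 - ∑ v, ∑ u ∈ G.neighborFinset v, |w u - w v| := by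
  have key := G.two_mul_sum_mul_sum_neighborFinset w (fun v u => Real.sign (w u - w v))
    fun u v => by rw [← Real.sign_neg, neg_sub]
  simp only [Real.self_mul_sign] at key
  simp only [diffPotential, diffStepR_apply, mul_add, Finset.sum_add_distrib, ← sq]
  linarith

lemma two_mul_diffPotential_sub (w : Fin n → ℝ) :
    2 * (diffPotential G w - diffPotential G (diffStepR G w)) =
      ∑ v, ∑ u ∈ G.neighborFinset v, (diffStepR G w u - diffStepR G w v) *
        (Real.sign (w u - w v) + Real.sign (diffStepR G w u - diffStepR G w v)) := by
  set b := diffStepR G w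
  have ha := G.two_mul_sum_mul_sum_neighborFinset b (fun v u => Real.sign (w u - w v))
    fun u v => by rw [← Real.sign_neg, neg_sub]
  have hb := G.two_mul_sum_mul_sum_neighborFinset b (fun v u => Real.sign (b u - b v))
    fun u v => by rw [← Real.sign_neg, neg_sub]
  have hdiff : diffPotential G w - diffPotential G b =
      -∑ v, b v * ∑ u ∈ G.neighborFinset v, Real.sign (w u - w v)
        - ∑ v, b v * ∑ u ∈ G.neighborFinset v, Real.sign (b u - b v) := by
    simp only [diffPotential, ← Finset.sum_sub_distrib, ← Finset.sum_neg_distrib]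
    refine Finset.sum_congr rfl fun v _ => ?_
    rw [diffStepR_apply G b v]
    linear_combination (-b v) * diffStepR_apply G w v
  simp only [mul_add, Finset.sum_add_distrib]
  linarith

lemma diffPotential_diffStepR_le (w : Fin n → ℝ) :
    diffPotential G (diffStepR G w) ≤ diffPotential G w := by
  have h := two_mul_diffPotential_sub G w
  have h0 : 0 ≤ ∑ v, ∑ u ∈ G.neighborFinset v, (diffStepR G w u - diffStepR G w v) *
      (Real.sign (w u - w v) + Real.sign (diffStepR G w u - diffStepR G w v)) :=
    Finset.sum_nonneg fun v _ => Finset.sum_nonneg fun u _ => Real.mul_sign_add_sign_nonneg _ _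
  linarith

lemma sign_eq_neg_of_diffPotential_diffStepR_eq {w : Fin n → ℝ}
    (h : diffPotential G (diffStepR G w) = diffPotential G w) {v u : Fin n} (hvu : G.Adj v u)
    (hne : Real.sign (diffStepR G w u - diffStepR G w v) ≠ 0) :
    Real.sign (w u - w v) = -Real.sign (diffStepR G w u - diffStepR G w v) := by
  have hsum := two_mul_diffPotential_sub G w
  rw [h, sub_self, mul_zero, eq_comm,
    Finset.sum_eq_zero_iff_of_nonneg fun v _ =>
      Finset.sum_nonneg fun u _ => Real.mul_sign_add_sign_nonneg _ _] at hsum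
  have hv := hsum v (Finset.mem_univ v)
  rw [Finset.sum_eq_zero_iff_of_nonneg fun u _ => Real.mul_sign_add_sign_nonneg _ _] at hv
  exact Real.sign_eq_neg_sign_of_mul_sign_add_sign_eq_zero hne
    (hv u ((G.mem_neighborFinset v u).2 hvu))

lemma sq_norm_sub_le_diffPotential (w : Fin n → ℝ) :
    ‖w‖ ^ 2 - n ^ 2 * ‖w‖ ≤ diffPotential G w := by
  have hE : ∑ v, ∑ u ∈ G.neighborFinset v, |w u - w v| ≤ ∑ _v : Fin n, ∑ _u : Fin n, 2 * ‖w‖ :=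
    Finset.sum_le_sum fun v _ =>
      (Finset.sum_le_sum_of_subset_of_nonneg (Finset.subset_univ _) fun _ _ _ => abs_nonneg _).trans
        (Finset.sum_le_sum fun u _ => (abs_sub (w u) (w v)).trans <| by
          linarith [(Real.norm_eq_abs _).symm.trans_le (norm_le_pi_norm w u),
            (Real.norm_eq_abs _).symm.trans_le (norm_le_pi_norm w v)])
  simp only [Finset.sum_const, Finset.card_univ, Fintype.card_fin, nsmul_eq_mul] at hE
  linarith [two_mul_diffPotential G w, sq_norm_le_sum_sq w]

lemma norm_diffR_le (w0 : Fin n → ℝ) (t : ℕ) :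
    ‖diffR G w0 t‖ ≤ n ^ 2 + |diffPotential G w0| + 1 := by
  have hP : diffPotential G (diffR G w0 t) ≤ diffPotential G w0 :=
    antitone_nat_of_succ_le (f := fun t => diffPotential G (diffR G w0 t))
      (fun t => by simpa only [diffR, Function.iterate_succ_apply'] using
        diffPotential_diffStepR_le G _) (Nat.zero_le t)
  have hlow := sq_norm_sub_le_diffPotential G (diffR G w0 t)
  nlinarith [le_abs_self (diffPotential G w0), abs_nonneg (diffPotential G w0),
    norm_nonneg (diffR G w0 t)]

lemma exists_lt_diffR_eq (w0 : Fin n → ℝ) : ∃ a b, a < b ∧ diffR G w0 a = diffR G w0 b := by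
  set C : ℝ := n ^ 2 + |diffPotential G w0| + 1
  refine Set.Finite.exists_lt_map_eq_of_forall_mem
    (t := Set.univ.pi fun v => {x | ∃ k : ℤ, x = w0 v + k ∧ |x| ≤ C}) (fun t => ?_)
    (Set.Finite.pi fun v => finite_setOf_eq_add_intCast_abs_le _ _)
  refine Set.mem_univ_pi.2 fun v => ?_
  obtain ⟨k, hk⟩ := exists_diffR_eq_add_intCast G w0 t v
  exact ⟨k, hk, ((Real.norm_eq_abs _).symm.trans_le (norm_le_pi_norm _ v)).trans
    (norm_diffR_le G w0 t)⟩

theorem diffStepR_isPeriodicPt_two {x : Fin n → ℝ} {p : ℕ} (hp : 0 < p)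
    (hx : Function.IsPeriodicPt (diffStepR G) p x) : Function.IsPeriodicPt (diffStepR G) 2 x := by
  set y : ℕ → Fin n → ℝ := fun k => (diffStepR G)^[k] x
  have hy_succ : ∀ k, y (k + 1) = diffStepR G (y k) := fun k => Function.iterate_succ_apply' _ _ _
  have hy_per : Function.Periodic y p := fun k => by
    simp only [y, add_comm k, Function.iterate_add_apply, (hx.apply_iterate k).eq]
  have hconst : ∀ k, diffPotential G (y (k + 1)) = diffPotential G (y k) :=
    fun k => Antitone.eq_of_periodic (f := fun k => diffPotential G (y k))
      (antitone_nat_of_succ_le fun k => by simpa only [hy_succ] using diffPotential_diffStepR_le G _)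
      (fun k => by simp only [hy_per k]) hp _ _
  have halt : ∀ v u, G.Adj v u → ∀ k,
      Real.sign (y (k + 1) u - y (k + 1) v) = -Real.sign (y k u - y k v) := fun v u hvu =>
    Function.Periodic.succ_eq_neg (s := fun k => Real.sign (y k u - y k v))
      (fun k => by simp only [hy_per k]) hp fun k hk => by
        simp only [hy_succ] at hk ⊢
        exact sign_eq_neg_of_diffPotential_diffStepR_eq G (hy_succ k ▸ hconst k) hvu hk
  funext v
  have h1 := diffStepR_apply G x v
  have h2 := diffStepR_apply G (diffStepR G x) v
  have hcancel : ∑ u ∈ G.neighborFinset v, (Real.sign (x u - x v) +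
      Real.sign (diffStepR G x u - diffStepR G x v)) = 0 :=
    Finset.sum_eq_zero fun u hu => by
      have : Real.sign (diffStepR G x u - diffStepR G x v) = -Real.sign (x u - x v) :=
        halt v u ((G.mem_neighborFinset v u).1 hu) 0
      rw [this, add_neg_cancel]
  rw [Finset.sum_add_distrib] at hcancel
  show diffStepR G (diffStepR G x) v = x v
  linarith

end

theorem stmt15 {n : ℕ} (G : SimpleGraph (Fin n)) (w0 : Fin n → ℝ) :
    ∃ T : ℕ, ∀ t : ℕ, T ≤ t → diffR G w0 (t + 2) = diffR G w0 t := by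
  obtain ⟨a, b, hab, heq⟩ := exists_lt_diffR_eq G w0
  have hper : Function.IsPeriodicPt (diffStepR G) (b - a) (diffR G w0 a) := by
    rw [Function.IsPeriodicPt, Function.IsFixedPt, diffR, ← Function.iterate_add_apply,
      Nat.sub_add_cancel hab.le]
    exact heq.symm
  have hper2 := diffStepR_isPeriodicPt_two G (Nat.sub_pos_of_lt hab) hper
  refine ⟨a, fun t ht => ?_⟩
  obtain ⟨m, rfl⟩ := Nat.exists_eq_add_of_le ht
  have hcycle := (hper2.apply_iterate m).eq
  simp only [diffR, ← Function.iterate_add_apply] at hcycle ⊢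
  rwa [show a + m + 2 = 2 + (m + a) by omega, add_comm a m]
end
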